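/- arXiv:1704.07602 — 4 statements merged into one kernel-verified Lean document; each statement's English description precedes it below -/
import Mathlib

section
/- Let C > 0, let δ_n ↓ 0, and for each n let w_n : ℝ^d × Ω → ℝ be jointly measurable and stationary, with w_n(·, ω) Lipschitz with constant C for every ω and sup_n sup_{x,ω} |δ_n w_n(x, ω)| ≤ C. Define Φ_n : Ω → Ω × Θ_C × [−C, C] by Φ_n(ω) := (ω, w_n(·, ω) − w_n(0, ω), −δ_n w_n(0, ω)), and let μ_n be the pushforward of ℙ under Φ_n. If μ_n converges weakly to a Borel probability measure μ, then for every x ∈ ℝ^d the pushforward of μ under τ̃_x equals μ. -/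
/-!
By stationarity, `τ̃_x (Φ_n ω)` and `Φ_n (τ_x ω)` agree in the first two coordinates, and their
last coordinates differ by `δ_n (w_n(x, ω) − w_n(0, ω))`, at most `C |x| |δ_n|`. As `τ_x`
preserves `ℙ`, a test function `F` then has `∫ F ∘ τ̃_x dμ_n − ∫ F dμ_n → 0` whenever it is
uniformly continuous in the last coordinate uniformly in the others. Products
`f(ω) g(θ) k(s)` of bounded continuous functions qualify, since `[−C, C]` is compact; passing to
the weak limit, `τ̃_x ♯ μ` and `μ` agree on them, and such products determine a finite measure
on the product space.
-/

open MeasureTheory Filter Topology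
open scoped ENNReal

noncomputable section

/-- Euclidean space `ℝ^d`. -/
abbrev EucSp (d : ℕ) := EuclideanSpace ℝ (Fin d)

/-- `Θ_C`: functions `θ : ℝ^d → ℝ` with `θ 0 = 0` that are Lipschitz with constant `C`. -/
def Theta (d : ℕ) (C : ℝ) : Type :=
  {θ : EucSp d → ℝ // θ 0 = 0 ∧ ∀ x y, |θ x - θ y| ≤ C * ‖x - y‖}

/-- The distance `d(θ₁, θ₂) = sup_x |θ₁ x - θ₂ x| / (1 + |x|²)`. -/
noncomputable def thetaDist {d : ℕ} {C : ℝ} (θ₁ θ₂ : Theta d C) : ℝ :=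
  ⨆ x : EucSp d, |θ₁.1 x - θ₂.1 x| / (1 + ‖x‖ ^ 2)

theorem thetaDist_term_le {d : ℕ} {C : ℝ} (θ₁ θ₂ : Theta d C) (x : EucSp d) :
    |θ₁.1 x - θ₂.1 x| / (1 + ‖x‖ ^ 2) ≤ |C| := by
  have hx : (0:ℝ) < 1 + ‖x‖ ^ 2 := by positivity
  have a := θ₁.2.2 x 0
  have b := θ₂.2.2 x 0
  rw [θ₁.2.1] at a
  rw [θ₂.2.1] at b
  simp only [sub_zero] at a b
  have h1 : |θ₁.1 x - θ₂.1 x| ≤ |θ₁.1 x| + |θ₂.1 x| := abs_sub _ _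
  rw [div_le_iff₀ hx]
  nlinarith [abs_nonneg C, norm_nonneg x, sq_nonneg (‖x‖ - 1), le_abs_self C,
    mul_nonneg (abs_nonneg C) (sq_nonneg (‖x‖ - 1)),
    mul_nonneg (sub_nonneg.mpr (le_abs_self C)) (norm_nonneg x)]

theorem thetaDist_bddAbove {d : ℕ} {C : ℝ} (θ₁ θ₂ : Theta d C) :
    BddAbove (Set.range fun x : EucSp d => |θ₁.1 x - θ₂.1 x| / (1 + ‖x‖ ^ 2)) := by
  refine ⟨|C|, ?_⟩
  rintro y ⟨x, rfl⟩
  exact thetaDist_term_le θ₁ θ₂ x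

/-- `(Θ_C, thetaDist)` is a metric space. -/
noncomputable instance {d : ℕ} {C : ℝ} : MetricSpace (Theta d C) where
  dist := thetaDist
  dist_self θ := by simp [thetaDist]
  dist_comm θ₁ θ₂ := by
    unfold thetaDist
    exact iSup_congr fun x => by rw [abs_sub_comm]
  dist_triangle θ₁ θ₂ θ₃ := by
    refine ciSup_le fun x => ?_
    have h : |θ₁.1 x - θ₃.1 x| / (1 + ‖x‖ ^ 2) ≤
        |θ₁.1 x - θ₂.1 x| / (1 + ‖x‖ ^ 2) + |θ₂.1 x - θ₃.1 x| / (1 + ‖x‖ ^ 2) := by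
      rw [← add_div]
      gcongr
      exact abs_sub_le _ _ _
    refine h.trans (add_le_add ?_ ?_)
    · exact le_ciSup (thetaDist_bddAbove θ₁ θ₂) x
    · exact le_ciSup (thetaDist_bddAbove θ₂ θ₃) x
  eq_of_dist_eq_zero {θ₁ θ₂} h := by
    have h' : thetaDist θ₁ θ₂ = 0 := h
    apply Subtype.ext
    funext x
    have hx : (0:ℝ) < 1 + ‖x‖ ^ 2 := by positivity
    have hle : |θ₁.1 x - θ₂.1 x| / (1 + ‖x‖ ^ 2) ≤ thetaDist θ₁ θ₂ :=
      le_ciSup (thetaDist_bddAbove θ₁ θ₂) x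
    rw [h'] at hle
    have h0 : 0 ≤ |θ₁.1 x - θ₂.1 x| / (1 + ‖x‖ ^ 2) := by positivity
    have heq : |θ₁.1 x - θ₂.1 x| / (1 + ‖x‖ ^ 2) = 0 := le_antisymm hle h0
    rcases div_eq_zero_iff.mp heq with hnum | hden
    · exact sub_eq_zero.mp (abs_eq_zero.mp hnum)
    · exact absurd hden hx.ne'

instance {d : ℕ} {C : ℝ} : MeasurableSpace (Theta d C) := borel _
instance {d : ℕ} {C : ℝ} : BorelSpace (Theta d C) := ⟨rfl⟩

/-- The shift `θ ↦ θ(· + x) − θ(x)` on `Θ_C`. -/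
def Theta.shift {d : ℕ} {C : ℝ} (x : EucSp d) (θ : Theta d C) : Theta d C :=
  ⟨fun y => θ.1 (y + x) - θ.1 x, by simp [θ.2.1], fun y z => by
    have h := θ.2.2 (y + x) (z + x)
    simpa using h⟩

open scoped BoundedContinuousFunction

universe u

namespace MeasureTheory.Measure

variable {X : Type*} {Y Z : Type u}
  [TopologicalSpace X] [MeasurableSpace X] [BorelSpace X] [HasOuterApproxClosed X]
  [TopologicalSpace Y] [MeasurableSpace Y] [BorelSpace Y] [HasOuterApproxClosed Y]
  [TopologicalSpace Z] [MeasurableSpace Z] [BorelSpace Z] [HasOuterApproxClosed Z]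

lemma ext_of_integral_mul_mul_boundedContinuousFunction {μ ν : Measure (X × Y × Z)}
    [IsFiniteMeasure μ] [IsFiniteMeasure ν]
    (h : ∀ (f : X →ᵇ ℝ) (g : Y →ᵇ ℝ) (k : Z →ᵇ ℝ),
      ∫ p, f p.1 * (g p.2.1 * k p.2.2) ∂μ = ∫ p, f p.1 * (g p.2.1 * k p.2.2) ∂ν) :
    μ = ν := by
  let W : Fin 2 → Type u := ![Y, Z]
  let : ∀ j, TopologicalSpace (W j) := Fin.cases ‹_› (Fin.cases ‹_› fun i ↦ i.elim0)
  let : ∀ j, MeasurableSpace (W j) := Fin.cases ‹_› (Fin.cases ‹_› fun i ↦ i.elim0)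
  have : ∀ j, BorelSpace (W j) := Fin.cases ‹_› (Fin.cases ‹_› fun i ↦ i.elim0)
  have : ∀ j, HasOuterApproxClosed (W j) := Fin.cases ‹_› (Fin.cases ‹_› fun i ↦ i.elim0)
  let e : (X × Y × Z) ≃ᵐ (X × Π j, W j) :=
    .prodCongr (.refl X) (MeasurableEquiv.piFinTwo W).symm
  rw [← e.map_measurableEquiv_injective.eq_iff]
  refine _root_.Measure.ext_of_integral_mul_prod_boundedContinuousFunction fun f g ↦ ?_
  rw [integral_map_equiv, integral_map_equiv]
  simp only [Fin.prod_univ_two]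
  exact h f (g 0) (g 1)

end MeasureTheory.Measure

namespace BoundedContinuousFunction

variable {X Y Z : Type*} [TopologicalSpace X] [TopologicalSpace Y] [TopologicalSpace Z]

def tripleMul (f : X →ᵇ ℝ) (g : Y →ᵇ ℝ) (k : Z →ᵇ ℝ) : X × Y × Z →ᵇ ℝ :=
  f.compContinuous ⟨Prod.fst, continuous_fst⟩ *
    (g.compContinuous ⟨fun p ↦ p.2.1, by fun_prop⟩ * k.compContinuous ⟨fun p ↦ p.2.2, by fun_prop⟩)

@[simp]
lemma tripleMul_apply (f : X →ᵇ ℝ) (g : Y →ᵇ ℝ) (k : Z →ᵇ ℝ) (p : X × Y × Z) :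
    tripleMul f g k p = f p.1 * (g p.2.1 * k p.2.2) :=
  rfl

lemma measurable_tripleMul [MeasurableSpace X] [OpensMeasurableSpace X]
    [MeasurableSpace Y] [OpensMeasurableSpace Y] [MeasurableSpace Z] [OpensMeasurableSpace Z]
    (f : X →ᵇ ℝ) (g : Y →ᵇ ℝ) (k : Z →ᵇ ℝ) : Measurable (tripleMul f g k) :=
  (f.continuous.measurable.comp measurable_fst).mul
    ((g.continuous.measurable.comp measurable_snd.fst).mul
      (k.continuous.measurable.comp measurable_snd.snd))

lemma dist_tripleMul_le (f : X →ᵇ ℝ) (g : Y →ᵇ ℝ) (k : Z →ᵇ ℝ) {p q : X × Y × Z}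
    (h₁ : p.1 = q.1) (h₂ : p.2.1 = q.2.1) :
    dist (tripleMul f g k p) (tripleMul f g k q) ≤ ‖f‖ * ‖g‖ * dist (k p.2.2) (k q.2.2) := by
  simp only [tripleMul_apply, h₁, h₂, dist_eq_norm, ← mul_sub, norm_mul, mul_assoc]
  gcongr
  · exact f.norm_coe_le_norm _
  · exact g.norm_coe_le_norm _

end BoundedContinuousFunction

open BoundedContinuousFunction

lemma dist_integral_map_comp_le {Ω X : Type*} [MeasurableSpace Ω] [TopologicalSpace X]
    [MeasurableSpace X] {ℙ : Measure Ω} [IsProbabilityMeasure ℙ] {σ : Ω → Ω}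
    (hσ : MeasurePreserving σ ℙ ℙ)
    {T : X → X} (hT : Measurable T) (G : X →ᵇ ℝ) (hG : Measurable G) (Φ : Ω → X) {ε : ℝ}
    (h : ∀ ω, dist (G (T (Φ ω))) (G (Φ (σ ω))) ≤ ε) :
    dist (∫ p, G (T p) ∂ℙ.map Φ) (∫ p, G p ∂ℙ.map Φ) ≤ ε := by
  by_cases hΦ : AEMeasurable Φ ℙ
  · have hΦσ : AEMeasurable (Φ ∘ σ) ℙ := by
      rw [← hσ.map_eq] at hΦ
      exact hΦ.comp_measurable hσ.measurable
    have hint {F : Ω → X} (hF : AEMeasurable F ℙ) : Integrable (fun ω ↦ G (F ω)) ℙ :=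
      .of_bound (hG.comp_aemeasurable hF).aestronglyMeasurable ‖G‖
        (ae_of_all _ fun _ ↦ G.norm_coe_le_norm _)
    have hinv : ∫ ω, G (Φ ω) ∂ℙ = ∫ ω, G (Φ (σ ω)) ∂ℙ := by
      conv_lhs => rw [← hσ.map_eq]
      rw [integral_map hσ.measurable.aemeasurable]
      rw [hσ.map_eq]
      exact (hG.comp_aemeasurable hΦ).aestronglyMeasurable
    rw [integral_map (f := fun p ↦ G (T p)) hΦ (hG.comp hT).aestronglyMeasurable,
      integral_map hΦ hG.aestronglyMeasurable,
      hinv, dist_eq_norm,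
      ← integral_sub (hint (F := fun ω ↦ T (Φ ω)) (hT.comp_aemeasurable hΦ))
        (hint (F := fun ω ↦ Φ (σ ω)) hΦσ)]
    simpa using norm_integral_le_of_norm_le_const (μ := ℙ)
      (f := fun ω ↦ G (T (Φ ω)) - G (Φ (σ ω)))
      (ae_of_all _ fun ω ↦ (dist_eq_norm _ _).ge.trans (h ω))
  · obtain ⟨ω⟩ := nonempty_of_isProbabilityMeasure ℙ
    simpa [Measure.map_of_not_aemeasurable hΦ] using dist_nonneg.trans (h ω)

lemma integral_comp_eq_of_tendsto_dist {ι X : Type*} [TopologicalSpace X] [MeasurableSpace X]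
    {l : Filter ι} [l.NeBot] {μs : ι → Measure X} {μ : Measure X}
    (hconv : ∀ f : X →ᵇ ℝ, Tendsto (fun n ↦ ∫ p, f p ∂μs n) l (𝓝 (∫ p, f p ∂μ)))
    {T : X → X} (hT : Continuous T) (G : X →ᵇ ℝ)
    (h : Tendsto (fun n ↦ dist (∫ p, G (T p) ∂μs n) (∫ p, G p ∂μs n)) l (𝓝 0)) :
    ∫ p, G (T p) ∂μ = ∫ p, G p ∂μ :=
  dist_eq_zero.1 <| tendsto_nhds_unique ((hconv (G.compContinuous ⟨T, hT⟩)).dist (hconv G)) h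

lemma tendsto_dist_integral_map_tripleMul {Ω X Y Z : Type*} [MeasurableSpace Ω]
    [TopologicalSpace X] [MeasurableSpace X] [OpensMeasurableSpace X]
    [TopologicalSpace Y] [MeasurableSpace Y] [OpensMeasurableSpace Y]
    [PseudoMetricSpace Z] [CompactSpace Z] [MeasurableSpace Z] [OpensMeasurableSpace Z]
    {ℙ : Measure Ω} [IsProbabilityMeasure ℙ] {σ : Ω → Ω} (hσ : MeasurePreserving σ ℙ ℙ)
    {T : X × Y × Z → X × Y × Z} (hT : Measurable T) (Φ : ℕ → Ω → X × Y × Z)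
    {r : ℕ → ℝ} (hr : Tendsto r atTop (𝓝 0))
    (h₁ : ∀ n ω, (T (Φ n ω)).1 = (Φ n (σ ω)).1) (h₂ : ∀ n ω, (T (Φ n ω)).2.1 = (Φ n (σ ω)).2.1)
    (h₃ : ∀ n ω, dist (T (Φ n ω)).2.2 (Φ n (σ ω)).2.2 ≤ r n)
    (f : X →ᵇ ℝ) (g : Y →ᵇ ℝ) (k : Z →ᵇ ℝ) :
    Tendsto (fun n ↦ dist (∫ p, tripleMul f g k (T p) ∂ℙ.map (Φ n))
      (∫ p, tripleMul f g k p ∂ℙ.map (Φ n))) atTop (𝓝 0) := by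
  rw [Metric.tendsto_nhds]
  intro ε hε
  set c := ‖f‖ * ‖g‖
  have hε' : 0 < ε / (c + 1) := by positivity
  -- `k` is uniformly continuous on the compact `Z`, so the error is uniform in `ω`.
  obtain ⟨η, hη, hk⟩ :=
    Metric.uniformContinuous_iff.1 (CompactSpace.uniformContinuous_of_continuous k.continuous) _ hε'
  filter_upwards [hr.eventually (gt_mem_nhds hη)] with n hn
  have hbound := dist_integral_map_comp_le hσ hT _ (measurable_tripleMul f g k) (Φ n)
    (ε := c * (ε / (c + 1))) fun ω ↦ (dist_tripleMul_le f g k (h₁ n ω) (h₂ n ω)).trans <|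
      mul_le_mul_of_nonneg_left (hk ((h₃ n ω).trans_lt hn)).le (by positivity)
  rw [Real.dist_0_eq_abs, abs_of_nonneg dist_nonneg]
  refine hbound.trans_lt ?_
  rw [mul_div_assoc', div_lt_iff₀ (by positivity)]
  nlinarith

namespace Theta

variable {d : ℕ} {C : ℝ}

lemma abs_sub_le_dist_mul (θ₁ θ₂ : Theta d C) (z : EucSp d) :
    |θ₁.1 z - θ₂.1 z| ≤ dist θ₁ θ₂ * (1 + ‖z‖ ^ 2) :=
  (div_le_iff₀ (by positivity)).1 (le_ciSup (thetaDist_bddAbove θ₁ θ₂) z)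

lemma dist_shift_le (x : EucSp d) (θ₁ θ₂ : Theta d C) :
    dist (shift x θ₁) (shift x θ₂) ≤ 3 * (1 + ‖x‖ ^ 2) * dist θ₁ θ₂ := by
  refine ciSup_le fun y ↦ (div_le_iff₀ (by positivity)).2 ?_
  have hD : 0 ≤ dist θ₁ θ₂ := dist_nonneg
  have hyx : 1 + ‖y + x‖ ^ 2 ≤ 2 * (1 + ‖x‖ ^ 2) * (1 + ‖y‖ ^ 2) := by
    nlinarith [norm_add_le y x, norm_nonneg (y + x), norm_nonneg x, norm_nonneg y,
      mul_nonneg (sq_nonneg ‖x‖) (sq_nonneg ‖y‖), sq_nonneg (‖x‖ - ‖y‖)]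
  calc |(shift x θ₁).1 y - (shift x θ₂).1 y|
      = |(θ₁.1 (y + x) - θ₂.1 (y + x)) - (θ₁.1 x - θ₂.1 x)| := by
        simp only [shift]; ring_nf
    _ ≤ |θ₁.1 (y + x) - θ₂.1 (y + x)| + |θ₁.1 x - θ₂.1 x| := abs_sub _ _
    _ ≤ dist θ₁ θ₂ * (1 + ‖y + x‖ ^ 2) + dist θ₁ θ₂ * (1 + ‖x‖ ^ 2) :=
        add_le_add (abs_sub_le_dist_mul θ₁ θ₂ _) (abs_sub_le_dist_mul θ₁ θ₂ _)
    _ ≤ 3 * (1 + ‖x‖ ^ 2) * dist θ₁ θ₂ * (1 + ‖y‖ ^ 2) := by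
        nlinarith [mul_le_mul_of_nonneg_left hyx hD, mul_nonneg hD (sq_nonneg ‖x‖),
          mul_nonneg (mul_nonneg hD (sq_nonneg ‖x‖)) (sq_nonneg ‖y‖), mul_nonneg hD (sq_nonneg ‖y‖)]

lemma lipschitzWith_shift (x : EucSp d) :
    LipschitzWith ⟨3 * (1 + ‖x‖ ^ 2), by positivity⟩ (shift (C := C) x) :=
  .of_dist_le_mul (dist_shift_le x)

@[fun_prop]
lemma continuous_shift (x : EucSp d) : Continuous (shift (C := C) x) :=
  (lipschitzWith_shift x).continuous

end Theta

section LiftedShift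

variable {d : ℕ} {C : ℝ} {Ω S : Type*} (τ : EucSp d → Ω → Ω) (x : EucSp d)

/-- The map `τ̃_x` of the paper. -/
def liftedShift (p : Ω × Theta d C × S) : Ω × Theta d C × S :=
  (τ x p.1, Theta.shift x p.2.1, p.2.2)

variable {τ x}

lemma continuous_liftedShift [TopologicalSpace Ω] [TopologicalSpace S] (hτ : Continuous (τ x)) :
    Continuous (liftedShift (C := C) (S := S) τ x) := by
  unfold liftedShift; fun_prop

lemma measurable_liftedShift [TopologicalSpace Ω] [MeasurableSpace Ω] [BorelSpace Ω]
    [MeasurableSpace S] (hτ : Continuous (τ x)) :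
    Measurable (liftedShift (C := C) (S := S) τ x) :=
  (hτ.measurable.comp measurable_fst).prodMk
    ((Theta.continuous_shift x).measurable.comp measurable_snd.fst |>.prodMk measurable_snd.snd)

variable {s : Set ℝ} {w : EucSp d → Ω → ℝ} {δ : ℝ} {φ : Ω → Ω × Theta d C × s}

lemma liftedShift_apply_fst (hφ : ∀ ω, (φ ω).1 = ω) (ω : Ω) :
    (liftedShift τ x (φ ω)).1 = (φ (τ x ω)).1 := by
  simp only [liftedShift, hφ]

lemma liftedShift_apply_snd_fst (hφ : ∀ ω y, (φ ω).2.1.1 y = w y ω - w 0 ω)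
    (hw : ∀ x y ω, w y (τ x ω) = w (y + x) ω) (ω : Ω) :
    (liftedShift τ x (φ ω)).2.1 = (φ (τ x ω)).2.1 := by
  refine Subtype.ext (funext fun y ↦ ?_)
  simp only [liftedShift, Theta.shift, hφ, hw, zero_add]
  ring

lemma dist_liftedShift_apply_snd_snd_le (hφ : ∀ ω, ((φ ω).2.2 : ℝ) = -(δ * w 0 ω))
    (hw : ∀ x y ω, w y (τ x ω) = w (y + x) ω) (hlip : ∀ ω x y, |w x ω - w y ω| ≤ C * ‖x - y‖)
    (ω : Ω) : dist (liftedShift τ x (φ ω)).2.2 (φ (τ x ω)).2.2 ≤ |δ| * (C * ‖x‖) := by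
  rw [Subtype.dist_eq, Real.dist_eq]
  simp only [liftedShift, hφ, hw, zero_add]
  calc |-(δ * w 0 ω) - -(δ * w x ω)| = |δ| * |w x ω - w 0 ω| := by
        rw [← abs_mul]; ring_nf
    _ ≤ |δ| * (C * ‖x‖) := by simpa using mul_le_mul_of_nonneg_left (hlip ω x 0) (abs_nonneg δ)

end LiftedShift

theorem stmt3_general {d : ℕ} {Ω : Type*} [TopologicalSpace Ω] [PolishSpace Ω]
    [MeasurableSpace Ω] [BorelSpace Ω]
    (ℙ : Measure Ω) [IsProbabilityMeasure ℙ]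
    -- the group of measure-preserving transformations
    (τ : EucSp d → Ω → Ω)
    (hτcont : ∀ x, Continuous (τ x))
    (hτmp : ∀ x, MeasurePreserving (τ x) ℙ ℙ)
    -- the data
    (C : ℝ)
    (δ : ℕ → ℝ)
    (hδlim : Tendsto δ atTop (𝓝 0))
    (w : ℕ → EucSp d → Ω → ℝ)
    (hwstat : ∀ n x y ω, w n y (τ x ω) = w n (y + x) ω)
    (hwlip : ∀ n ω x y, |w n x ω - w n y ω| ≤ C * ‖x - y‖)
    -- the maps `Φ_n` and the push-forward measures `μ_n`
    (Φ : ℕ → Ω → Ω × Theta d C × (Set.Icc (-C) C : Set ℝ))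
    (hΦ : ∀ n ω, (Φ n ω).1 = ω ∧
      (∀ x, ((Φ n ω).2.1).1 x = w n x ω - w n 0 ω) ∧
      ((Φ n ω).2.2 : ℝ) = -(δ n * w n 0 ω))
    (μseq : ℕ → Measure (Ω × Theta d C × (Set.Icc (-C) C : Set ℝ)))
    (hμseq : ∀ n, μseq n = ℙ.map (Φ n))
    -- weak convergence to `μ`
    (μ : Measure (Ω × Theta d C × (Set.Icc (-C) C : Set ℝ)))
    [IsProbabilityMeasure μ]
    (hconv : ∀ f : BoundedContinuousFunction (Ω × Theta d C × (Set.Icc (-C) C : Set ℝ)) ℝ,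
      Tendsto (fun n => ∫ p, f p ∂(μseq n)) atTop (𝓝 (∫ p, f p ∂μ))) :
    ∀ x : EucSp d,
      μ.map (fun p : Ω × Theta d C × (Set.Icc (-C) C : Set ℝ) =>
        (τ x p.1, Theta.shift x p.2.1, p.2.2)) = μ := by
  intro x
  have hT := measurable_liftedShift (C := C) (S := Set.Icc (-C) C) (hτcont x)
  change μ.map (liftedShift τ x) = μ
  refine Measure.ext_of_integral_mul_mul_boundedContinuousFunction fun f g k ↦ ?_
  change ∫ p, tripleMul f g k p ∂(μ.map _) = ∫ p, tripleMul f g k p ∂μ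
  rw [integral_map hT.aemeasurable (measurable_tripleMul f g k).aestronglyMeasurable]
  refine integral_comp_eq_of_tendsto_dist hconv (continuous_liftedShift (hτcont x)) _ ?_
  simp only [hμseq]
  refine tendsto_dist_integral_map_tripleMul (hτmp x) hT Φ
    (by simpa using hδlim.abs.mul_const (C * ‖x‖))
    (fun n ↦ liftedShift_apply_fst fun ω ↦ (hΦ n ω).1)
    (fun n ↦ liftedShift_apply_snd_fst (fun ω ↦ (hΦ n ω).2.1) (hwstat n))
    (fun n ↦ dist_liftedShift_apply_snd_snd_le (fun ω ↦ (hΦ n ω).2.2) (hwstat n) (hwlip n)) f g k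

/-- If the push-forwards `μ_n = Φ_n ♯ ℙ` of a stationary, uniformly Lipschitz, uniformly
bounded family converge weakly to `μ`, then `μ` is invariant under every `τ̃_x`. -/
theorem stmt3 {d : ℕ} {Ω : Type*} [TopologicalSpace Ω] [PolishSpace Ω]
    [MeasurableSpace Ω] [BorelSpace Ω]
    (ℙ : Measure Ω) [IsProbabilityMeasure ℙ]
    -- the group of measure-preserving transformations
    (τ : EucSp d → Ω → Ω)
    (hτgrp : ∀ x y ω, τ (x + y) ω = τ x (τ y ω))
    (hτzero : ∀ ω, τ 0 ω = ω)
    (hτcont : ∀ x, Continuous (τ x))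
    (hτmp : ∀ x, MeasurePreserving (τ x) ℙ ℙ)
    (hτmeas : Measurable fun p : EucSp d × Ω => τ p.1 p.2)
    -- the data
    (C : ℝ) (hC : 0 < C)
    (δ : ℕ → ℝ) (hδpos : ∀ n, 0 < δ n) (hδanti : Antitone δ)
    (hδlim : Tendsto δ atTop (𝓝 0))
    (w : ℕ → EucSp d → Ω → ℝ)
    (hwmeas : ∀ n, Measurable fun p : EucSp d × Ω => w n p.1 p.2)
    (hwstat : ∀ n x y ω, w n y (τ x ω) = w n (y + x) ω)
    (hwlip : ∀ n ω x y, |w n x ω - w n y ω| ≤ C * ‖x - y‖)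
    (hwbd : ∀ n x ω, |δ n * w n x ω| ≤ C)
    -- the maps `Φ_n` and the push-forward measures `μ_n`
    (Φ : ℕ → Ω → Ω × Theta d C × (Set.Icc (-C) C : Set ℝ))
    (hΦ : ∀ n ω, (Φ n ω).1 = ω ∧
      (∀ x, ((Φ n ω).2.1).1 x = w n x ω - w n 0 ω) ∧
      ((Φ n ω).2.2 : ℝ) = -(δ n * w n 0 ω))
    (μseq : ℕ → Measure (Ω × Theta d C × (Set.Icc (-C) C : Set ℝ)))
    (hμseq : ∀ n, μseq n = ℙ.map (Φ n))
    -- weak convergence to `μ`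
    (μ : Measure (Ω × Theta d C × (Set.Icc (-C) C : Set ℝ)))
    [IsProbabilityMeasure μ]
    (hconv : ∀ f : BoundedContinuousFunction (Ω × Theta d C × (Set.Icc (-C) C : Set ℝ)) ℝ,
      Tendsto (fun n => ∫ p, f p ∂(μseq n)) atTop (𝓝 (∫ p, f p ∂μ))) :
    ∀ x : EucSp d,
      μ.map (fun p : Ω × Theta d C × (Set.Icc (-C) C : Set ℝ) =>
        (τ x p.1, Theta.shift x p.2.1, p.2.2)) = μ :=
  stmt3_general ℙ τ hτcont hτmp C δ hδlim w hwstat hwlip Φ hΦ μseq hμseq μ hconv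

end
end

section
/- Let C > 0 and let μ be a Borel probability measure on Ω × Θ_C such that ∫_{Ω × Θ_C} θ(x) dμ(ω, θ) = 0 for every x ∈ ℝ^d. Let r : Ω × Θ_C → ℝ^d be a bounded Borel measurable map such that for μ-almost every (ω, θ) and every v ∈ ℝ^d, lim_{t→+∞} θ(tv)/t = ⟨r(ω, θ), v⟩. Then ∫_{Ω × Θ_C} r dμ = 0. -/
/-!
It suffices to show `∫ ⟪v, r⟫ dμ = 0` for every `v`. Since `θ` is `C`-Lipschitz with `θ 0 = 0`,
the functions `θ(tv)/t` are bounded by `C‖v‖`, so dominated convergence lets the limit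
`t → ∞` pass under the integral, where `∫ θ(tv)/t dμ = 0` for every `t` by the centring of `μ`.
-/

open MeasureTheory Filter Topology
open scoped RealInnerProductSpace

noncomputable section

theorem Theta.continuous_eval {d : ℕ} {C : ℝ} (x : EucSp d) :
    Continuous fun θ : Theta d C => θ.1 x := by
  have hx : (0 : ℝ) < 1 + ‖x‖ ^ 2 := by positivity
  refine (LipschitzWith.of_dist_le_mul (K := (1 + ‖x‖ ^ 2).toNNReal) fun θ₁ θ₂ => ?_).continuous
  rw [Real.dist_eq, Real.coe_toNNReal _ hx.le, mul_comm, ← div_le_iff₀ hx]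
  exact le_ciSup (thetaDist_bddAbove θ₁ θ₂) x

theorem Theta.abs_apply_le {d : ℕ} {C : ℝ} (θ : Theta d C) (x : EucSp d) :
    |θ.1 x| ≤ C * ‖x‖ := by
  simpa [θ.2.1] using θ.2.2 x 0

theorem Theta.abs_apply_smul_div_le {d : ℕ} {C : ℝ} (θ : Theta d C) (v : EucSp d) (t : ℝ) :
    |θ.1 (t • v) / t| ≤ C * ‖v‖ := by
  rcases eq_or_ne t 0 with rfl | ht
  · simpa using (abs_nonneg _).trans (θ.abs_apply_le v)
  · rw [abs_div, div_le_iff₀ (abs_pos.2 ht)]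
    calc |θ.1 (t • v)| ≤ C * ‖t • v‖ := θ.abs_apply_le _
      _ = C * ‖v‖ * |t| := by rw [norm_smul, Real.norm_eq_abs]; ring

theorem integral_eq_zero_of_tendsto_of_integral_eq_zero {α ι E : Type*} [MeasurableSpace α]
    [NormedAddCommGroup E] [NormedSpace ℝ E] {μ : Measure α} [IsFiniteMeasure μ]
    {l : Filter ι} [l.IsCountablyGenerated] [l.NeBot] {F : ι → α → E} {f : α → E} (K : ℝ)
    (hF_meas : ∀ᶠ i in l, AEStronglyMeasurable (F i) μ)
    (hF_bound : ∀ᶠ i in l, ∀ᵐ a ∂μ, ‖F i a‖ ≤ K)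
    (hF_int : ∀ᶠ i in l, ∫ a, F i a ∂μ = 0)
    (h_lim : ∀ᵐ a ∂μ, Tendsto (fun i => F i a) l (𝓝 (f a))) :
    ∫ a, f a ∂μ = 0 := by
  have h := tendsto_integral_filter_of_dominated_convergence (fun _ => K) hF_meas hF_bound
    (integrable_const K) h_lim
  exact tendsto_nhds_unique (h.congr' (hF_int.mono fun _ hi => hi)) tendsto_const_nhds

theorem integral_inner_eq_zero_of_tendsto_smul_div {d : ℕ} {Ω : Type*} [MeasurableSpace Ω]
    {C : ℝ} {μ : Measure (Ω × Theta d C)} [IsFiniteMeasure μ]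
    (hmean : ∀ x : EucSp d, ∫ p : Ω × Theta d C, (p.2).1 x ∂μ = 0)
    {r : Ω × Theta d C → EucSp d}
    (hr : ∀ᵐ p ∂μ, ∀ v : EucSp d,
      Tendsto (fun t : ℝ => (p.2).1 (t • v) / t) atTop (𝓝 ⟪r p, v⟫)) (v : EucSp d) :
    ∫ p, ⟪v, r p⟫ ∂μ = 0 := by
  refine integral_eq_zero_of_tendsto_of_integral_eq_zero (l := atTop)
    (F := fun t p => (p.2).1 (t • v) / t) (C * ‖v‖) (.of_forall fun t => ?_)
    (.of_forall fun t => .of_forall fun p => (p.2).abs_apply_smul_div_le v t)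
    (.of_forall fun t => by simp only [integral_div, hmean, zero_div]) ?_
  · exact (((Theta.continuous_eval _).measurable.comp measurable_snd).div_const
      _).aestronglyMeasurable
  · filter_upwards [hr] with p hp
    simpa only [real_inner_comm] using hp v

theorem stmt13_general {d : ℕ} {Ω : Type*}
    [MeasurableSpace Ω]
    (C : ℝ)
    (μ : Measure (Ω × Theta d C)) [IsProbabilityMeasure μ]
    (hmean : ∀ x : EucSp d, ∫ p : Ω × Theta d C, (p.2).1 x ∂μ = 0)
    (r : Ω × Theta d C → EucSp d)
    (hr : ∀ᵐ p ∂μ, ∀ v : EucSp d,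
      Tendsto (fun t : ℝ => (p.2).1 (t • v) / t) atTop (𝓝 ⟪r p, v⟫)) :
    ∫ p, r p ∂μ = 0 := by
  -- A non-integrable `r` has Bochner integral `0` by convention.
  by_cases hint : Integrable r μ
  · exact integral_eq_zero_of_forall_integral_inner_eq_zero ℝ r hint
      (integral_inner_eq_zero_of_tendsto_smul_div hmean hr)
  · exact integral_undef hint

/-- If `∫ θ(x) dμ = 0` for every `x` and `θ(tv)/t → ⟨r(ω,θ), v⟩` `μ`-a.s. for a bounded
measurable `r`, then `∫ r dμ = 0`. -/
theorem stmt13 {d : ℕ} {Ω : Type*} [TopologicalSpace Ω] [PolishSpace Ω]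
    [MeasurableSpace Ω] [BorelSpace Ω]
    (ℙ : Measure Ω) [IsProbabilityMeasure ℙ]
    (C : ℝ) (hC : 0 < C)
    (μ : Measure (Ω × Theta d C)) [IsProbabilityMeasure μ]
    (hmean : ∀ x : EucSp d, ∫ p : Ω × Theta d C, (p.2).1 x ∂μ = 0)
    (r : Ω × Theta d C → EucSp d) (hrmeas : Measurable r)
    (hrbdd : ∃ B : ℝ, ∀ p, ‖r p‖ ≤ B)
    (hr : ∀ᵐ p ∂μ, ∀ v : EucSp d,
      Tendsto (fun t : ℝ => (p.2).1 (t • v) / t) atTop (𝓝 ⟪r p, v⟫)) :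
    ∫ p, r p ∂μ = 0 :=
  stmt13_general C μ hmean r hr

end
end

section
/- Let C > 0 and let μ be a Borel probability measure on Ω × Θ_C whose pushforward under each τ̃_x, x ∈ ℝ^d, equals μ, and whose first marginal equals ℙ. Let (μ_ω)_{ω ∈ Ω} be a disintegration of μ with respect to its first coordinate (a conditional probability kernel from Ω to Θ_C with μ = ∫ δ_ω ⊗ μ_ω dℙ(ω)), and define θ̂(x, ω) := ∫_{Θ_C} θ(x) dμ_ω(θ). Then for all x, z ∈ ℝ^d, for ℙ-almost every ω, θ̂(x + z, ω) − θ̂(z, ω) = θ̂(x, τ_z ω); that is, θ̂ has stationary increments. -/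
open MeasureTheory Filter Topology
open scoped MeasureTheory

noncomputable section

section Aux

variable {d : ℕ} {C : ℝ}

theorem my_eval_bound (ϑ : Theta d C) (x : EucSp d) : |ϑ.1 x| ≤ C * ‖x‖ := by
  have h := ϑ.2.2 x 0
  rw [ϑ.2.1] at h
  simpa using h

theorem my_dist_eval_le (ϑ₁ ϑ₂ : Theta d C) (x : EucSp d) :
    |ϑ₁.1 x - ϑ₂.1 x| ≤ (1 + ‖x‖ ^ 2) * dist ϑ₁ ϑ₂ := by
  have hx : (0:ℝ) < 1 + ‖x‖ ^ 2 := by positivity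
  have h : |ϑ₁.1 x - ϑ₂.1 x| / (1 + ‖x‖ ^ 2) ≤ thetaDist ϑ₁ ϑ₂ :=
    le_ciSup (thetaDist_bddAbove ϑ₁ ϑ₂) x
  rw [div_le_iff₀ hx] at h
  calc |ϑ₁.1 x - ϑ₂.1 x| ≤ thetaDist ϑ₁ ϑ₂ * (1 + ‖x‖ ^ 2) := h
    _ = (1 + ‖x‖ ^ 2) * dist ϑ₁ ϑ₂ := by rw [mul_comm]; rfl

theorem my_continuous_eval (x : EucSp d) : Continuous fun ϑ : Theta d C => ϑ.1 x := by
  have hx : (0:ℝ) ≤ 1 + ‖x‖ ^ 2 := by positivity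
  refine (LipschitzWith.of_dist_le_mul (K := (1 + ‖x‖ ^ 2).toNNReal) fun ϑ₁ ϑ₂ => ?_).continuous
  rw [Real.dist_eq, Real.coe_toNNReal _ hx]
  exact my_dist_eval_le ϑ₁ ϑ₂ x

theorem my_measurable_eval (x : EucSp d) : Measurable fun ϑ : Theta d C => ϑ.1 x :=
  (my_continuous_eval x).measurable

theorem my_continuous_shift (z : EucSp d) : Continuous (Theta.shift (C := C) z) := by
  have hz : (0:ℝ) ≤ 2 + 3 * ‖z‖ ^ 2 := by positivity
  refine (LipschitzWith.of_dist_le_mul (K := (2 + 3 * ‖z‖ ^ 2).toNNReal) fun ϑ₁ ϑ₂ => ?_).continuous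
  rw [Real.coe_toNNReal _ hz]
  show thetaDist _ _ ≤ _
  refine ciSup_le fun y => ?_
  have hy : (0:ℝ) < 1 + ‖y‖ ^ 2 := by positivity
  have h1 : |ϑ₁.1 (y + z) - ϑ₂.1 (y + z)| ≤ (1 + ‖y + z‖ ^ 2) * dist ϑ₁ ϑ₂ :=
    my_dist_eval_le ϑ₁ ϑ₂ (y + z)
  have h2 : |ϑ₁.1 z - ϑ₂.1 z| ≤ (1 + ‖z‖ ^ 2) * dist ϑ₁ ϑ₂ := my_dist_eval_le ϑ₁ ϑ₂ z
  have hn : ‖y + z‖ ≤ ‖y‖ + ‖z‖ := norm_add_le y z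
  have hd : (0:ℝ) ≤ dist ϑ₁ ϑ₂ := dist_nonneg
  have habs : |(Theta.shift z ϑ₁).1 y - (Theta.shift z ϑ₂).1 y| ≤
      |ϑ₁.1 (y + z) - ϑ₂.1 (y + z)| + |ϑ₁.1 z - ϑ₂.1 z| := by
    show |ϑ₁.1 (y + z) - ϑ₁.1 z - (ϑ₂.1 (y + z) - ϑ₂.1 z)| ≤ _
    calc |ϑ₁.1 (y + z) - ϑ₁.1 z - (ϑ₂.1 (y + z) - ϑ₂.1 z)|
        = |(ϑ₁.1 (y + z) - ϑ₂.1 (y + z)) - (ϑ₁.1 z - ϑ₂.1 z)| := by congr 1; ring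
      _ ≤ _ := abs_sub _ _
  rw [div_le_iff₀ hy]
  have hns : ‖y + z‖ ^ 2 ≤ (‖y‖ + ‖z‖) ^ 2 := by
    have := norm_nonneg (y + z)
    nlinarith
  nlinarith [norm_nonneg y, norm_nonneg z, sq_nonneg (‖y‖ - ‖z‖),
    mul_nonneg (mul_nonneg hd (sq_nonneg ‖z‖)) (sq_nonneg ‖y‖)]

theorem my_measurable_shift (z : EucSp d) : Measurable (Theta.shift (C := C) z) :=
  (my_continuous_shift z).measurable

theorem my_integrable_of_bdd {α : Type*} [MeasurableSpace α] {ν : MeasureTheory.Measure α}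
    [MeasureTheory.IsFiniteMeasure ν] {f : α → ℝ} (hf : Measurable f) {M : ℝ}
    (h : ∀ a, |f a| ≤ M) : MeasureTheory.Integrable f ν :=
  ⟨hf.aestronglyMeasurable, MeasureTheory.HasFiniteIntegral.of_bounded
    (C := M) (ae_of_all _ fun a => by simpa [Real.norm_eq_abs] using h a)⟩

end Aux

/-- If `μ` is `τ̃`-invariant with first marginal `ℙ` and `(μ_ω)` is a disintegration of
`μ` (given by a Markov kernel `κ` with `μ = ℙ ⊗ₘ κ`), then
`θ̂(x, ω) := ∫ θ(x) dμ_ω(θ)` has stationary increments: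
`θ̂(x + z, ω) − θ̂(z, ω) = θ̂(x, τ_z ω)` for `ℙ`-a.e. `ω`. -/
theorem stmt15 {d : ℕ} {Ω : Type*} [TopologicalSpace Ω] [PolishSpace Ω]
    [MeasurableSpace Ω] [BorelSpace Ω]
    (ℙ : Measure Ω) [IsProbabilityMeasure ℙ]
    (τ : EucSp d → Ω → Ω)
    (hτgrp : ∀ x y ω, τ (x + y) ω = τ x (τ y ω))
    (hτzero : ∀ ω, τ 0 ω = ω)
    (hτcont : ∀ x, Continuous (τ x))
    (hτmp : ∀ x, MeasurePreserving (τ x) ℙ ℙ)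
    (hτmeas : Measurable fun p : EucSp d × Ω => τ p.1 p.2)
    (C : ℝ) (hC : 0 < C)
    (μ : Measure (Ω × Theta d C)) [IsProbabilityMeasure μ]
    (hinv : ∀ x : EucSp d,
      μ.map (fun p : Ω × Theta d C => (τ x p.1, Theta.shift x p.2)) = μ)
    (hmarg : μ.map Prod.fst = ℙ)
    (κ : ProbabilityTheory.Kernel Ω (Theta d C)) [ProbabilityTheory.IsMarkovKernel κ]
    (hκ : μ = ℙ.compProd κ)
    (θhat : EucSp d → Ω → ℝ)
    (hθhat : ∀ x ω, θhat x ω = ∫ ϑ : Theta d C, ϑ.1 x ∂(κ ω)) :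
    ∀ x z : EucSp d, ∀ᵐ ω ∂ℙ,
      θhat (x + z) ω - θhat z ω = θhat x (τ z ω) := by
  intro x z
  have hSM : ∀ y : EucSp d, StronglyMeasurable (θhat y) := by
    intro y
    have h1 : StronglyMeasurable fun p : Ω × Theta d C => p.2.1 y :=
      ((my_measurable_eval y).comp measurable_snd).stronglyMeasurable
    have h2 := h1.integral_kernel_prod_right' (κ := κ)
    have heq : θhat y = fun ω => ∫ ϑ, ϑ.1 y ∂κ ω := funext fun ω => hθhat y ω
    rw [heq]; exact h2
  have hθmeas : ∀ y, Measurable (θhat y) := fun y => (hSM y).measurable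
  have hθbd : ∀ (y : EucSp d) (ω : Ω), |θhat y ω| ≤ C * ‖y‖ := by
    intro y ω
    rw [hθhat]
    have h := norm_integral_le_of_norm_le_const (μ := κ ω)
      (f := fun ϑ : Theta d C => ϑ.1 y) (C := C * ‖y‖)
      (ae_of_all _ fun ϑ => by simpa [Real.norm_eq_abs] using my_eval_bound ϑ y)
    simpa [Real.norm_eq_abs, measure_univ] using h
  have hev_int : ∀ (ω : Ω) (y : EucSp d), Integrable (fun ϑ : Theta d C => ϑ.1 y) (κ ω) :=
    fun ω y => my_integrable_of_bdd (my_measurable_eval y) (fun ϑ => my_eval_bound ϑ y)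
  set f : Ω → ℝ := fun ω => θhat (x + z) ω - θhat z ω with hf_def
  set g : Ω → ℝ := fun ω => θhat x (τ z ω) with hg_def
  have hfmeas : Measurable f := (hθmeas (x + z)).sub (hθmeas z)
  have hgmeas : Measurable g := (hθmeas x).comp (hτmp z).measurable
  have hfint : Integrable f ℙ := my_integrable_of_bdd hfmeas
    (M := C * ‖x + z‖ + C * ‖z‖)
    (fun ω => (abs_sub _ _).trans (add_le_add (hθbd _ _) (hθbd _ _)))
  have hgint : Integrable g ℙ := my_integrable_of_bdd hgmeas (fun ω => hθbd x _)
  have key : ∀ ω, τ (-z) (τ z ω) = ω := fun ω => by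
    rw [← hτgrp, neg_add_cancel, hτzero]
  refine ae_eq_of_forall_setIntegral_eq_of_sigmaFinite (fun s _ _ => hfint.integrableOn)
    (fun s _ _ => hgint.integrableOn) ?_
  intro s hs _
  set iA : Ω → ℝ := s.indicator fun _ => (1 : ℝ) with hiA
  have hiAmeas : Measurable iA := measurable_const.indicator hs
  have hiAbd : ∀ ω, |iA ω| ≤ 1 := fun ω => by
    by_cases h : ω ∈ s <;> simp [hiA, Set.indicator_apply, h]
  set H : Ω × Theta d C → ℝ := fun p => iA p.1 * (p.2.1 (x + z) - p.2.1 z) with hH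
  set K : Ω × Theta d C → ℝ := fun p => iA (τ (-z) p.1) * p.2.1 x with hK
  have hHmeas : Measurable H := (hiAmeas.comp measurable_fst).mul
    (((my_measurable_eval (x + z)).comp measurable_snd).sub
      ((my_measurable_eval z).comp measurable_snd))
  have hKmeas : Measurable K := (hiAmeas.comp
    ((hτmp (-z)).measurable.comp measurable_fst)).mul
    ((my_measurable_eval x).comp measurable_snd)
  have hHbd : ∀ p, |H p| ≤ C * ‖x + z‖ + C * ‖z‖ := fun p => by
    rw [hH]
    calc |iA p.1 * (p.2.1 (x + z) - p.2.1 z)|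
        = |iA p.1| * |p.2.1 (x + z) - p.2.1 z| := abs_mul _ _
      _ ≤ 1 * (C * ‖x + z‖ + C * ‖z‖) :=
          mul_le_mul (hiAbd _)
            ((abs_sub _ _).trans (add_le_add (my_eval_bound _ _) (my_eval_bound _ _)))
            (abs_nonneg _) zero_le_one
      _ = _ := one_mul _
  have hKbd : ∀ p, |K p| ≤ C * ‖x‖ := fun p => by
    rw [hK]
    calc |iA (τ (-z) p.1) * p.2.1 x| = |iA (τ (-z) p.1)| * |p.2.1 x| := abs_mul _ _
      _ ≤ 1 * (C * ‖x‖) :=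
          mul_le_mul (hiAbd _) (my_eval_bound _ _) (abs_nonneg _) zero_le_one
      _ = _ := one_mul _
  have hHint : Integrable H μ := my_integrable_of_bdd hHmeas hHbd
  have hKint : Integrable K μ := my_integrable_of_bdd hKmeas hKbd
  have step1 : ∫ ω in s, f ω ∂ℙ = ∫ p, H p ∂μ := by
    rw [← integral_indicator hs, hκ, Measure.integral_compProd (hκ ▸ hHint)]
    refine integral_congr_ae (ae_of_all _ fun ω => ?_)
    simp only [hH]
    rw [integral_const_mul, integral_sub (hev_int ω (x + z)) (hev_int ω z)]
    by_cases h : ω ∈ s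
    · simp [Set.indicator_apply, h, hiA, hf_def, hθhat]
    · simp [Set.indicator_apply, h, hiA]
  have hT : Measurable fun p : Ω × Theta d C => (τ z p.1, Theta.shift z p.2) :=
    ((hτmp z).measurable.comp measurable_fst).prodMk
      ((my_measurable_shift z).comp measurable_snd)
  have step2 : ∫ p, K p ∂μ = ∫ p, H p ∂μ := by
    conv_lhs => rw [← hinv z]
    rw [integral_map hT.aemeasurable hKmeas.aestronglyMeasurable]
    refine integral_congr_ae (ae_of_all _ fun p => ?_)
    simp only [hK, hH]
    rw [key p.1]
    rfl
  have step3 : ∫ p, K p ∂μ = ∫ ω in s, g ω ∂ℙ := by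
    rw [hκ, Measure.integral_compProd (hκ ▸ hKint)]
    have e1 : ∫ ω, (∫ ϑ, K (ω, ϑ) ∂κ ω) ∂ℙ = ∫ ω, iA (τ (-z) ω) * θhat x ω ∂ℙ := by
      refine integral_congr_ae (ae_of_all _ fun ω => ?_)
      simp only [hK]
      rw [integral_const_mul, hθhat]
    rw [e1]
    have e2 : ∫ ω, iA (τ (-z) ω) * θhat x ω ∂ℙ
        = ∫ ω, iA (τ (-z) (τ z ω)) * θhat x (τ z ω) ∂ℙ := by
      have hFmeas : Measurable fun ω : Ω => iA (τ (-z) ω) * θhat x ω :=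
        (hiAmeas.comp (hτmp (-z)).measurable).mul (hθmeas x)
      conv_lhs => rw [← (hτmp z).map_eq]
      rw [integral_map (hτmp z).measurable.aemeasurable hFmeas.aestronglyMeasurable]
    rw [e2]
    have e3 : ∫ ω, iA (τ (-z) (τ z ω)) * θhat x (τ z ω) ∂ℙ = ∫ ω, s.indicator g ω ∂ℙ := by
      refine integral_congr_ae (ae_of_all _ fun ω => ?_)
      simp only [key]
      by_cases h : ω ∈ s <;> simp [Set.indicator_apply, h, hiA, hg_def]
    rw [e3, integral_indicator hs]
  calc ∫ ω in s, f ω ∂ℙ = ∫ p, H p ∂μ := step1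
    _ = ∫ p, K p ∂μ := step2.symm
    _ = ∫ ω in s, g ω ∂ℙ := step3

end
end

section
/- Assume the action (τ_x) is ergodic. Let C > 0 and let F : ℝ^d × Ω → ℝ be jointly measurable such that: F(0, ω) = 0 and F(·, ω) is Lipschitz with constant C for every ω; F has stationary increments, i.e. F(x + z, ω) − F(z, ω) = F(x, τ_z ω) for all x, z ∈ ℝ^d and ω ∈ Ω; and E_ℙ[F(x, ·)] = 0 for every x ∈ ℝ^d. Then for ℙ-almost every ω, F(·, ω) is strictly sublinear at infinity: lim_{|x| → +∞} F(x, ω)/|x| = 0. -/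
/-!
Fix a direction `e`. Stationarity makes `F (n • e)` the Birkhoff sum of the mean-zero function
`F e` under `τ e`, so by the maximal ergodic lemma the event `∃ n, q * n < F (n • e)` has
probability `< 1` for every `q > 0`. The event that `F (n • e) - q * n` is unbounded above lies
inside it and is invariant under every `τ x` (which moves `F y` by at most `2 C ‖x‖`), so it is
null by ergodicity. Hence `F (n • e) ω / n → 0` almost surely, simultaneously for `e` in a
countable dense set. The rescalings `u ↦ F (t • u) ω / t` are equi-Lipschitz, so this extends to
all directions and becomes uniform on the unit sphere, which is the claim.
-/

open MeasureTheory Filter Topology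

noncomputable section

open Finset Metric
open scoped NNReal

section Birkhoff

variable {α : Type*} (f : α → α) (g : α → ℝ)

def birkhoffMax (n : ℕ) (x : α) : ℝ :=
  (range (n + 1)).sup' nonempty_range_add_one fun k => birkhoffSum f g k x

variable {f g}

theorem birkhoffSum_le_birkhoffMax {k n : ℕ} (hk : k ≤ n) (x : α) :
    birkhoffSum f g k x ≤ birkhoffMax f g n x :=
  le_sup' (fun k => birkhoffSum f g k x) (mem_range_succ_iff.2 hk)

theorem birkhoffMax_nonneg (n : ℕ) (x : α) : 0 ≤ birkhoffMax f g n x := by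
  simpa using birkhoffSum_le_birkhoffMax (f := f) (g := g) (Nat.zero_le n) x

theorem birkhoffMax_mono (x : α) : Monotone fun n => birkhoffMax f g n x :=
  fun _ _ hmn => sup'_mono _ (range_subset_range.2 (Nat.succ_le_succ hmn)) _

theorem birkhoffMax_pos_iff {n : ℕ} {x : α} :
    0 < birkhoffMax f g n x ↔ ∃ k ≤ n, 0 < birkhoffSum f g k x := by
  simp [birkhoffMax, lt_sup'_iff]

theorem birkhoffMax_le_max_add (n : ℕ) (x : α) :
    birkhoffMax f g n x ≤ max 0 (g x + birkhoffMax f g n (f x)) := by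
  refine sup'_le _ _ fun k hk => ?_
  rcases k with _ | k
  · simp
  · rw [birkhoffSum_succ']
    have hk : k ≤ n := by rw [mem_range] at hk; omega
    exact le_max_of_le_right (add_le_add le_rfl (birkhoffSum_le_birkhoffMax hk _))

variable [MeasurableSpace α] {μ : Measure α}

theorem measurable_birkhoffSum (hf : Measurable f) (hg : Measurable g) (n : ℕ) :
    Measurable (birkhoffSum f g n) :=
  Finset.measurable_sum _ fun k _ => hg.comp (hf.iterate k)

theorem measurable_birkhoffMax (hf : Measurable f) (hg : Measurable g) (n : ℕ) :
    Measurable (birkhoffMax f g n) :=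
  Finset.measurable_range_sup'' fun k _ => measurable_birkhoffSum hf hg k

theorem integrable_birkhoffMax (hf : MeasurePreserving f μ μ) (hgm : Measurable g)
    (hg : Integrable g μ) (n : ℕ) : Integrable (birkhoffMax f g n) μ := by
  refine Integrable.mono' (g := fun x => ∑ k ∈ range n, |g (f^[k] x)|)
    (integrable_finsetSum _ fun k _ => ((hf.iterate k).integrable_comp_of_integrable hg).abs)
    (measurable_birkhoffMax hf.measurable hgm n).aestronglyMeasurable (ae_of_all _ fun x => ?_)
  rw [Real.norm_of_nonneg (birkhoffMax_nonneg n x)]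
  refine sup'_le _ _ fun k hk => ?_
  calc birkhoffSum f g k x ≤ ∑ j ∈ range k, |g (f^[j] x)| :=
        sum_le_sum fun j _ => le_abs_self _
    _ ≤ ∑ j ∈ range n, |g (f^[j] x)| :=
        sum_le_sum_of_subset_of_nonneg (range_subset_range.2 (mem_range_succ_iff.1 hk))
          fun _ _ _ => abs_nonneg _

/-- Hopf's maximal ergodic lemma. -/
theorem setIntegral_birkhoffMax_pos_nonneg (hf : MeasurePreserving f μ μ) (hgm : Measurable g)
    (hg : Integrable g μ) (n : ℕ) : 0 ≤ ∫ x in {x | 0 < birkhoffMax f g n x}, g x ∂μ := by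
  set M := birkhoffMax f g n
  set E := {x | 0 < M x}
  have hMm : Measurable M := measurable_birkhoffMax hf.measurable hgm n
  have hMi : Integrable M μ := integrable_birkhoffMax hf hgm hg n
  have hMfi : Integrable (M ∘ f) μ := hf.integrable_comp_of_integrable hMi
  have hM : ∫ x in E, M x ∂μ = ∫ x, M x ∂μ :=
    setIntegral_eq_integral_of_forall_compl_eq_zero fun x hx =>
      le_antisymm (not_lt.1 hx) (birkhoffMax_nonneg n x)
  have hMf : ∫ x in E, M (f x) ∂μ ≤ ∫ x, M x ∂μ :=
    calc ∫ x in E, M (f x) ∂μ ≤ ∫ x, M (f x) ∂μ :=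
          setIntegral_le_integral hMfi (ae_of_all _ fun x => birkhoffMax_nonneg n (f x))
      _ = ∫ x, M x ∂μ := by
          rw [← integral_map hf.measurable.aemeasurable hMm.aestronglyMeasurable, hf.map_eq]
  calc 0 ≤ ∫ x in E, M x ∂μ - ∫ x in E, M (f x) ∂μ := by linarith
    _ = ∫ x in E, (M x - M (f x)) ∂μ := (integral_sub hMi.integrableOn hMfi.integrableOn).symm
    _ ≤ ∫ x in E, g x ∂μ :=
        setIntegral_mono_on (hMi.sub hMfi).integrableOn hg.integrableOn
          (measurableSet_lt measurable_const hMm) fun x hx => sub_le_iff_le_add.2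
            ((le_max_iff.1 (birkhoffMax_le_max_add n x)).resolve_left (not_le.2 hx))

theorem setIntegral_exists_birkhoffSum_pos_nonneg (hf : MeasurePreserving f μ μ)
    (hgm : Measurable g) (hg : Integrable g μ) :
    0 ≤ ∫ x in {x | ∃ n, 0 < birkhoffSum f g n x}, g x ∂μ := by
  have hU : {x | ∃ n, 0 < birkhoffSum f g n x} = ⋃ n, {x | 0 < birkhoffMax f g n x} := by
    ext x
    simp only [Set.mem_ofPred_eq, Set.mem_iUnion, birkhoffMax_pos_iff]
    exact ⟨fun ⟨n, hn⟩ => ⟨n, n, le_rfl, hn⟩, fun ⟨_, k, _, hk⟩ => ⟨k, hk⟩⟩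
  rw [hU]
  refine ge_of_tendsto' (tendsto_setIntegral_of_monotone
    (fun n => measurableSet_lt measurable_const (measurable_birkhoffMax hf.measurable hgm n))
    (fun _ _ hmn x hx => hx.trans_le (birkhoffMax_mono x hmn)) hg.integrableOn)
    fun n => setIntegral_birkhoffMax_pos_nonneg hf hgm hg n

theorem measurableSet_exists_birkhoffSum_gt (hf : Measurable f) (hg : Measurable g) (q : ℝ) :
    MeasurableSet {x | ∃ n : ℕ, q * n < birkhoffSum f g n x} :=
  measurableSet_setOfPred.2 <| Measurable.exists fun n =>
    measurableSet_setOfPred.1 (measurableSet_lt measurable_const (measurable_birkhoffSum hf hg n))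

theorem mul_measureReal_le_setIntegral_of_birkhoffSum_gt [IsFiniteMeasure μ]
    (hf : MeasurePreserving f μ μ) (hgm : Measurable g) (hg : Integrable g μ) (q : ℝ) :
    q * μ.real {x | ∃ n : ℕ, q * n < birkhoffSum f g n x} ≤
      ∫ x in {x | ∃ n : ℕ, q * n < birkhoffSum f g n x}, g x ∂μ := by
  have h := setIntegral_exists_birkhoffSum_pos_nonneg (g := fun x => g x - q) hf
    (hgm.sub measurable_const) (hg.sub (integrable_const q))
  have hS : ∀ n x, birkhoffSum f (fun x => g x - q) n x = birkhoffSum f g n x - n * q := by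
    intro n x
    simp [birkhoffSum, Finset.sum_sub_distrib]
  simp only [hS, sub_pos] at h
  rw [integral_sub hg.integrableOn (integrable_const q), setIntegral_const] at h
  simpa [smul_eq_mul, mul_comm] using h

theorem measure_exists_birkhoffSum_gt_lt_one [IsProbabilityMeasure μ]
    (hf : MeasurePreserving f μ μ) (hgm : Measurable g) (hg : Integrable g μ)
    (hg0 : ∫ x, g x ∂μ = 0) {q : ℝ} (hq : 0 < q) :
    μ {x | ∃ n : ℕ, q * n < birkhoffSum f g n x} < 1 := by
  set U := {x | ∃ n : ℕ, q * n < birkhoffSum f g n x}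
  by_contra! hU
  have hU1 : μ U = 1 := le_antisymm prob_le_one hU
  have hae : ∀ᵐ x ∂μ, x ∈ U :=
    ae_iff.2 ((prob_compl_eq_zero_iff
      (measurableSet_exists_birkhoffSum_gt hf.measurable hgm q)).2 hU1)
  have h := mul_measureReal_le_setIntegral_of_birkhoffSum_gt hf hgm hg q
  rw [Measure.restrict_eq_self_of_ae_mem hae, hg0, measureReal_def, hU1] at h
  simp only [ENNReal.toReal_one, mul_one] at h
  linarith

end Birkhoff

theorem forall_exists_add_lt_of_abs_sub_le {s t c : ℕ → ℝ} {K : ℝ} (hst : ∀ n, |s n - t n| ≤ K)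
    (hs : ∀ R : ℕ, ∃ n, c n + R < s n) (R : ℕ) : ∃ n, c n + R < t n := by
  obtain ⟨n, hn⟩ := hs (R + ⌈K⌉₊)
  refine ⟨n, ?_⟩
  have hK := Nat.le_ceil K
  have := (abs_le.1 (hst n)).2
  push_cast at hn
  linarith

theorem tendsto_div_natCast_of_eventually_abs_le {u : ℕ → ℝ}
    (hu : ∀ k : ℕ, ∀ᶠ n in atTop, |u n| ≤ n / (k + 1)) :
    Tendsto (fun n => u n / n) atTop (𝓝 0) := by
  refine Metric.tendsto_nhds.2 fun ε hε => ?_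
  obtain ⟨k, hk⟩ := exists_nat_one_div_lt hε
  filter_upwards [hu k, eventually_gt_atTop 0] with n hn hn0
  have hn0' : (0 : ℝ) < n := Nat.cast_pos.2 hn0
  rw [Real.dist_0_eq_abs, abs_div, Nat.abs_cast, div_lt_iff₀ hn0']
  calc |u n| ≤ n / (k + 1) := hn
    _ = 1 / (k + 1) * n := by ring
    _ < ε * n := mul_lt_mul_of_pos_right hk hn0'

section Stationary

variable {E Ω : Type*} [NormedAddCommGroup E]
  {τ : E → Ω → Ω} {F : E → Ω → ℝ} {K : ℝ≥0} {e : E}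

theorem birkhoffSum_eq_of_stationary (hF0 : ∀ ω, F 0 ω = 0)
    (hFstat : ∀ x z ω, F (x + z) ω - F z ω = F x (τ z ω)) (n : ℕ) (ω : Ω) :
    birkhoffSum (τ e) (F e) n ω = F (n • e) ω := by
  induction n generalizing ω with
  | zero => simp [hF0]
  | succ n ih => rw [birkhoffSum_succ', ih, ← hFstat, succ_nsmul]; ring

theorem abs_sub_le_of_stationary (hF0 : ∀ ω, F 0 ω = 0) (hFlip : ∀ ω, LipschitzWith K (F · ω))
    (hFstat : ∀ x z ω, F (x + z) ω - F z ω = F x (τ z ω)) (x y : E) (ω : Ω) :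
    |F y (τ x ω) - F y ω| ≤ 2 * K * ‖x‖ := by
  have h1 : |F (y + x) ω - F y ω| ≤ K * ‖x‖ := by
    simpa [Real.dist_eq, dist_eq_norm] using (hFlip ω).dist_le_mul (y + x) y
  have h2 : |F x ω| ≤ K * ‖x‖ := by
    simpa [hF0, Real.dist_eq, dist_eq_norm] using (hFlip ω).dist_le_mul x 0
  rw [← hFstat]
  calc |F (y + x) ω - F x ω - F y ω| = |(F (y + x) ω - F y ω) - F x ω| := by ring_nf
    _ ≤ |F (y + x) ω - F y ω| + |F x ω| := abs_sub _ _
    _ ≤ 2 * K * ‖x‖ := by linarith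

variable [MeasurableSpace Ω] {μ : Measure Ω} [IsProbabilityMeasure μ]

theorem ae_eventually_le_mul_of_stationary (hτ : MeasurePreserving (τ e) μ μ)
    (herg : ∀ s : Set Ω, MeasurableSet s → (∀ x, τ x ⁻¹' s = s) → μ s = 0 ∨ μ s = 1)
    (hFm : ∀ x, Measurable (F x)) (hF0 : ∀ ω, F 0 ω = 0)
    (hFlip : ∀ ω, LipschitzWith K (F · ω))
    (hFstat : ∀ x z ω, F (x + z) ω - F z ω = F x (τ z ω))
    (hFmean : ∫ ω, F e ω ∂μ = 0) {q : ℝ} (hq : 0 < q) :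
    ∀ᵐ ω ∂μ, ∀ᶠ n : ℕ in atTop, F (n • e) ω ≤ q * n := by
  set S := {ω | ∀ R : ℕ, ∃ n : ℕ, q / 2 * n + R < F (n • e) ω}
  have hSm : MeasurableSet S :=
    measurableSet_setOfPred.2 <| Measurable.forall fun R => Measurable.exists fun n =>
      measurableSet_setOfPred.1 (measurableSet_lt measurable_const (hFm _))
  have hSinv : ∀ x, τ x ⁻¹' S = S := fun x => Set.ext fun ω =>
    ⟨forall_exists_add_lt_of_abs_sub_le fun n =>
        abs_sub_le_of_stationary hF0 hFlip hFstat x (n • e) ω,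
      forall_exists_add_lt_of_abs_sub_le fun n => by
        rw [abs_sub_comm]; exact abs_sub_le_of_stationary hF0 hFlip hFstat x (n • e) ω⟩
  have hFe : Integrable (F e) μ := Integrable.of_bound (hFm e).aestronglyMeasurable (K * ‖e‖)
    (ae_of_all _ fun ω => by simpa [hF0, Real.dist_eq] using (hFlip ω).dist_le_mul e 0)
  have hS1 : μ S < 1 := by
    refine (measure_mono fun ω hω => ?_).trans_lt
      (measure_exists_birkhoffSum_gt_lt_one hτ (hFm e) hFe hFmean (half_pos hq))
    obtain ⟨n, hn⟩ := hω 0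
    exact ⟨n, by simpa [birkhoffSum_eq_of_stationary hF0 hFstat] using hn⟩
  have hS0 : μ S = 0 := (herg S hSm hSinv).resolve_right hS1.ne
  filter_upwards [measure_eq_zero_iff_ae_notMem.1 hS0] with ω hω
  by_contra h
  simp only [not_eventually, not_le] at h
  refine hω fun R => ?_
  have hR : ∀ᶠ n : ℕ in atTop, (R : ℝ) ≤ q / 2 * n :=
    (tendsto_natCast_atTop_atTop.const_mul_atTop (half_pos hq)).eventually_ge_atTop _
  obtain ⟨n, hn, hRn⟩ := (h.and_eventually hR).exists
  exact ⟨n, by linarith⟩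

theorem ae_tendsto_div_of_stationary (hτ : MeasurePreserving (τ e) μ μ)
    (herg : ∀ s : Set Ω, MeasurableSet s → (∀ x, τ x ⁻¹' s = s) → μ s = 0 ∨ μ s = 1)
    (hFm : ∀ x, Measurable (F x)) (hF0 : ∀ ω, F 0 ω = 0)
    (hFlip : ∀ ω, LipschitzWith K (F · ω))
    (hFstat : ∀ x z ω, F (x + z) ω - F z ω = F x (τ z ω))
    (hFmean : ∫ ω, F e ω ∂μ = 0) :
    ∀ᵐ ω ∂μ, Tendsto (fun n : ℕ => F (n • e) ω / n) atTop (𝓝 0) := by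
  have hbound (k : ℕ) : ∀ᵐ ω ∂μ, ∀ᶠ n : ℕ in atTop, |F (n • e) ω| ≤ n / (k + 1) := by
    have hq : (0 : ℝ) < 1 / (k + 1) := by positivity
    filter_upwards [ae_eventually_le_mul_of_stationary hτ herg hFm hF0 hFlip hFstat hFmean hq,
      ae_eventually_le_mul_of_stationary (F := fun x ω => -F x ω) hτ herg
        (fun x => (hFm x).neg) (by simp [hF0]) (fun ω => (hFlip ω).neg)
        (fun x z ω => by rw [← hFstat]; ring) (by rw [integral_neg, hFmean, neg_zero]) hq]
      with ω hle hge
    filter_upwards [hle, hge] with n hn hn'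
    rw [abs_le]
    constructor <;> linarith [show (1 : ℝ) / (k + 1) * n = n / (k + 1) by ring]
  filter_upwards [ae_all_iff.2 hbound] with ω hω
  exact tendsto_div_natCast_of_eventually_abs_le hω

end Stationary

section Sublinear

variable {E : Type*} [NormedAddCommGroup E] [NormedSpace ℝ E] {f : E → ℝ} {K : ℝ≥0}

theorem LipschitzWith.comp_smul_div (hf : LipschitzWith K f) (t : ℝ) :
    LipschitzWith K fun u => f (t • u) / t := by
  rcases eq_or_ne t 0 with rfl | ht
  · simpa using LipschitzWith.const' (α := E) (0 : ℝ)
  refine LipschitzWith.of_dist_le_mul fun u v => ?_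
  rw [Real.dist_eq, ← sub_div, abs_div, div_le_iff₀ (abs_pos.2 ht)]
  calc |f (t • u) - f (t • v)| ≤ K * ‖t • u - t • v‖ := by
        simpa [Real.dist_eq, dist_eq_norm] using hf.dist_le_mul (t • u) (t • v)
    _ = K * dist u v * |t| := by
        rw [← smul_sub, norm_smul, Real.norm_eq_abs, dist_eq_norm]; ring

theorem LipschitzWith.tendsto_smul_div_of_nat (hf : LipschitzWith K f) {e : E}
    (he : Tendsto (fun n : ℕ => f (n • e) / n) atTop (𝓝 0)) :
    Tendsto (fun t : ℝ => f (t • e) / t) atTop (𝓝 0) := by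
  simp_rw [← Nat.cast_smul_eq_nsmul ℝ] at he
  have hfloor : Tendsto (fun t : ℝ => f ((⌊t⌋₊ : ℝ) • e) / t) atTop (𝓝 0) := by
    have h := (he.comp (tendsto_nat_floor_atTop (α := ℝ))).mul tendsto_nat_floor_div_atTop
    rw [zero_mul] at h
    refine h.congr' ?_
    filter_upwards [eventually_ge_atTop 1] with t ht
    have : (⌊t⌋₊ : ℝ) ≠ 0 := Nat.cast_ne_zero.2 (Nat.floor_pos.2 ht).ne'
    simp only [Function.comp_apply]
    field_simp
  have herr : Tendsto (fun t : ℝ => K * ‖e‖ / t) atTop (𝓝 0) :=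
    tendsto_const_nhds.div_atTop tendsto_id
  refine squeeze_zero_norm' (a := fun t => ‖f ((⌊t⌋₊ : ℝ) • e) / t‖ + K * ‖e‖ / t) ?_
    (by simpa using hfloor.norm.add herr)
  filter_upwards [eventually_gt_atTop 0] with t ht
  have hdist : |f (t • e) - f ((⌊t⌋₊ : ℝ) • e)| ≤ K * ‖e‖ := by
    calc |f (t • e) - f ((⌊t⌋₊ : ℝ) • e)| ≤ K * ‖t • e - (⌊t⌋₊ : ℝ) • e‖ := by
          simpa [Real.dist_eq, dist_eq_norm] using hf.dist_le_mul (t • e) ((⌊t⌋₊ : ℝ) • e)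
      _ = K * ((t - ⌊t⌋₊) * ‖e‖) := by
          rw [← sub_smul, norm_smul, Real.norm_of_nonneg (sub_nonneg.2 (Nat.floor_le ht.le))]
      _ ≤ K * (1 * ‖e‖) := by
          gcongr
          linarith [Nat.lt_floor_add_one t]
      _ = K * ‖e‖ := by ring
  rw [Real.norm_eq_abs, Real.norm_eq_abs, abs_div, abs_div, abs_of_pos ht, ← add_div,
    div_le_div_iff_of_pos_right ht]
  calc |f (t • e)| ≤ |f ((⌊t⌋₊ : ℝ) • e)| + |f (t • e) - f ((⌊t⌋₊ : ℝ) • e)| := by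
        simpa using abs_add_le (f ((⌊t⌋₊ : ℝ) • e)) (f (t • e) - f ((⌊t⌋₊ : ℝ) • e))
    _ ≤ |f ((⌊t⌋₊ : ℝ) • e)| + K * ‖e‖ := by linarith

theorem LipschitzWith.tendsto_smul_div_of_dense (hf : LipschitzWith K f) {D : Set E}
    (hD : Dense D) (hDf : ∀ e ∈ D, Tendsto (fun t : ℝ => f (t • e) / t) atTop (𝓝 0)) (u : E) :
    Tendsto (fun t : ℝ => f (t • u) / t) atTop (𝓝 0) := by
  have hclosed : IsClosed {u | Tendsto (fun t : ℝ => f (t • u) / t) atTop (𝓝 0)} :=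
    (LipschitzWith.uniformEquicontinuous _ K hf.comp_smul_div).equicontinuous
      |>.isClosed_setOfPred_tendsto (f := fun _ => (0 : ℝ)) continuous_const
  exact hclosed.closure_subset_iff.2 hDf (hD.closure_eq ▸ Set.mem_univ u)

theorem LipschitzWith.tendstoUniformly_smul_div_sphere [ProperSpace E] (hf : LipschitzWith K f)
    (h : ∀ u, Tendsto (fun t : ℝ => f (t • u) / t) atTop (𝓝 0)) :
    TendstoUniformly (fun (t : ℝ) (u : sphere (0 : E) 1) => f (t • (u : E)) / t) 0 atTop := by
  have heq : Equicontinuous fun (t : ℝ) (u : sphere (0 : E) 1) => f (t • (u : E)) / t :=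
    (LipschitzWith.uniformEquicontinuous _ K
      fun t => mul_one K ▸ (hf.comp_smul_div t).comp (LipschitzWith.subtype_val _)).equicontinuous
  exact UniformFun.tendsto_iff_tendstoUniformly.1
    ((heq.tendsto_uniformFun_iff_pi _ _).2 (tendsto_pi_nhds.2 fun u => h u))

theorem LipschitzWith.tendsto_div_norm_of_dense [ProperSpace E] (hf : LipschitzWith K f)
    {D : Set E} (hD : Dense D)
    (hDf : ∀ e ∈ D, Tendsto (fun n : ℕ => f (n • e) / n) atTop (𝓝 0)) :
    Tendsto (fun x => f x / ‖x‖) (comap norm atTop) (𝓝 0) := by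
  have hunif := hf.tendstoUniformly_smul_div_sphere
    (hf.tendsto_smul_div_of_dense hD fun e he => hf.tendsto_smul_div_of_nat (hDf e he))
  refine Metric.tendsto_nhds.2 fun ε hε => ?_
  obtain ⟨R, hR⟩ := eventually_atTop.1 (Metric.tendstoUniformly_iff.1 hunif ε hε)
  rw [eventually_comap]
  filter_upwards [eventually_ge_atTop (max R 1)] with r hr x rfl
  have hx : ‖x‖ ≠ 0 := by linarith [le_max_right R 1]
  have hu : ‖x‖⁻¹ • x ∈ sphere (0 : E) 1 := by simp [norm_smul, hx]
  simpa [smul_smul, hx, dist_comm] using hR ‖x‖ (le_of_max_le_left hr) ⟨_, hu⟩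

end Sublinear

theorem stmt16_general {d : ℕ} {Ω : Type*}
    [MeasurableSpace Ω]
    (ℙ : Measure Ω) [IsProbabilityMeasure ℙ]
    (τ : EucSp d → Ω → Ω)
    (hτmp : ∀ x, MeasurePreserving (τ x) ℙ ℙ)
    (herg : ∀ E : Set Ω, MeasurableSet E → (∀ x, τ x ⁻¹' E = E) → ℙ E = 0 ∨ ℙ E = 1)
    (C : ℝ)
    (F : EucSp d → Ω → ℝ)
    (hFmeas : Measurable fun p : EucSp d × Ω => F p.1 p.2)
    (hF0 : ∀ ω, F 0 ω = 0)
    (hFlip : ∀ ω x y, |F x ω - F y ω| ≤ C * ‖x - y‖)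
    (hFstat : ∀ x z ω, F (x + z) ω - F z ω = F x (τ z ω))
    (hFmean : ∀ x, ∫ ω, F x ω ∂ℙ = 0) :
    ∀ᵐ ω ∂ℙ,
      Tendsto (fun x : EucSp d => F x ω / ‖x‖) (Filter.comap norm atTop) (𝓝 0) := by
  have hlip : ∀ ω, LipschitzWith (Real.toNNReal C) (F · ω) := fun ω =>
    LipschitzWith.of_dist_le' fun x y => by simpa [Real.dist_eq, dist_eq_norm] using hFlip ω x y
  have hFm : ∀ x, Measurable (F x) := fun x => hFmeas.comp measurable_prodMk_left
  obtain ⟨D, hDc, hDd⟩ := TopologicalSpace.exists_countable_dense (EucSp d)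
  have hradial : ∀ᵐ ω ∂ℙ, ∀ e ∈ D, Tendsto (fun n : ℕ => F (n • e) ω / n) atTop (𝓝 0) :=
    (ae_ball_iff hDc).2 fun e _ =>
      ae_tendsto_div_of_stationary (hτmp e) herg hFm hF0 hlip hFstat (hFmean e)
  filter_upwards [hradial] with ω hω
  exact (hlip ω).tendsto_div_norm_of_dense hDd hω

/-- If the action `(τ_x)` is ergodic and `F` is jointly measurable, vanishes at `x = 0`,
is `C`-Lipschitz in `x`, has stationary increments and mean zero, then `ℙ`-a.s.
`F(·, ω)` is strictly sublinear at infinity: `F(x, ω)/|x| → 0` as `|x| → ∞`. -/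
theorem stmt16 {d : ℕ} {Ω : Type*} [TopologicalSpace Ω] [PolishSpace Ω]
    [MeasurableSpace Ω] [BorelSpace Ω]
    (ℙ : Measure Ω) [IsProbabilityMeasure ℙ]
    (τ : EucSp d → Ω → Ω)
    (hτgrp : ∀ x y ω, τ (x + y) ω = τ x (τ y ω))
    (hτzero : ∀ ω, τ 0 ω = ω)
    (hτcont : ∀ x, Continuous (τ x))
    (hτmp : ∀ x, MeasurePreserving (τ x) ℙ ℙ)
    (hτmeas : Measurable fun p : EucSp d × Ω => τ p.1 p.2)
    (herg : ∀ E : Set Ω, MeasurableSet E → (∀ x, τ x ⁻¹' E = E) → ℙ E = 0 ∨ ℙ E = 1)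
    (C : ℝ) (hC : 0 < C)
    (F : EucSp d → Ω → ℝ)
    (hFmeas : Measurable fun p : EucSp d × Ω => F p.1 p.2)
    (hF0 : ∀ ω, F 0 ω = 0)
    (hFlip : ∀ ω x y, |F x ω - F y ω| ≤ C * ‖x - y‖)
    (hFstat : ∀ x z ω, F (x + z) ω - F z ω = F x (τ z ω))
    (hFmean : ∀ x, ∫ ω, F x ω ∂ℙ = 0) :
    ∀ᵐ ω ∂ℙ,
      Tendsto (fun x : EucSp d => F x ω / ‖x‖) (Filter.comap norm atTop) (𝓝 0) :=
  stmt16_general ℙ τ hτmp herg C F hFmeas hF0 hFlip hFstat hFmean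

end
end
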